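/- arXiv:2408.01903 — 8 statements merged into one kernel-verified Lean document; each statement's English description precedes it below -/
import Mathlib

section
/- Let p, n, m be positive integers and let A be a p×n matrix of positive integers such that each row is strictly increasing and all entries are at most m. Define B by sorting each column of A in increasing order (so b_{i,j} is the i-th smallest element of the multiset {a_{1,j},...,a_{p,j}}). Then each row of B is strictly increasing. -/
/-- Column `j` of a `p × n` tableau, as a multiset. -/
def colMultiset {p n : ℕ} (A : Fin p → Fin n → ℕ) (j : Fin n) : Multiset ℕ :=
  Finset.univ.val.map (fun i => A i j)

lemma countP_colMultiset {p n : ℕ} (A : Fin p → Fin n → ℕ) (j : Fin n)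
    (P : ℕ → Prop) [DecidablePred P] :
    (colMultiset A j).countP P = (Finset.univ.filter (fun t => P (A t j))).card := by
  rw [colMultiset, Multiset.countP_map]
  rfl

/-- If `f` is monotone and at least `i+1` values of `f` satisfy a downward-closed
predicate `P`, then `P (f i)` holds. -/
lemma key_lemma {p : ℕ} (f : Fin p → ℕ) (hf : Monotone f)
    (P : ℕ → Prop) [DecidablePred P] (hP : ∀ x y, x ≤ y → P y → P x) (i : Fin p)
    (h : (i : ℕ) + 1 ≤ (Finset.univ.filter (fun t => P (f t))).card) : P (f i) := by
  by_contra hni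
  have hsub : Finset.univ.filter (fun t => P (f t)) ⊆ Finset.Iio i := by
    intro t ht
    simp only [Finset.mem_filter] at ht
    rw [Finset.mem_Iio]
    by_contra hti
    exact hni (hP _ _ (hf (not_lt.mp hti)) ht.2)
  have := Finset.card_le_card hsub
  rw [Fin.card_Iio] at this
  omega

/-- A monotone `f` has at least `i+1` values that are `≤ f i`. -/
lemma key_lemma2 {p : ℕ} (f : Fin p → ℕ) (hf : Monotone f) (i : Fin p) :
    (i : ℕ) + 1 ≤ (Finset.univ.filter (fun t => f t ≤ f i)).card := by
  have hsub : Finset.Iic i ⊆ Finset.univ.filter (fun t => f t ≤ f i) := by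
    intro t ht
    simp only [Finset.mem_filter, Finset.mem_univ, true_and]
    exact hf (Finset.mem_Iic.mp ht)
  have := Finset.card_le_card hsub
  rwa [Fin.card_Iic] at this

/-- If `A` is a `p × n` matrix of positive integers with strictly increasing rows and
entries at most `m`, and `B` is obtained from `A` by sorting each column into
nondecreasing order (i.e. each column of `B` is monotone and has the same multiset of
entries as the corresponding column of `A`), then each row of `B` is strictly
increasing. -/
theorem stmt_0 {p n m : ℕ} (hp : 0 < p) (hn : 0 < n) (hm : 0 < m)
    (A B : Fin p → Fin n → ℕ)
    (hApos : ∀ i j, 1 ≤ A i j) (hAle : ∀ i j, A i j ≤ m)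
    (hArows : ∀ i, StrictMono (A i))
    (hBcols : ∀ j : Fin n, Monotone (fun i => B i j))
    (hBA : ∀ j, colMultiset B j = colMultiset A j) :
    ∀ i, StrictMono (B i) := by
  intro i j k hjk
  -- `B` column `k` has at least `i+1` entries `≤ B i k`.
  have h1 : (i : ℕ) + 1 ≤ (Finset.univ.filter (fun t => B t k ≤ B i k)).card :=
    key_lemma2 (fun t => B t k) (hBcols k) i
  -- hence so does `A` column `k`.
  have h2 : (i : ℕ) + 1 ≤ (Finset.univ.filter (fun t => A t k ≤ B i k)).card := by
    rw [← countP_colMultiset A k (fun x => x ≤ B i k), ← hBA k,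
      countP_colMultiset B k (fun x => x ≤ B i k)]
    exact h1
  -- for each such row `t`, `A t j < A t k ≤ B i k`, so `A` column `j` has
  -- at least `i+1` entries `< B i k`.
  have h3 : (i : ℕ) + 1 ≤ (Finset.univ.filter (fun t => A t j < B i k)).card := by
    refine le_trans h2 (Finset.card_le_card ?_)
    intro t ht
    simp only [Finset.mem_filter, Finset.mem_univ, true_and] at ht ⊢
    exact lt_of_lt_of_le (hArows t hjk) ht
  -- transfer to `B` column `j`.
  have h4 : (i : ℕ) + 1 ≤ (Finset.univ.filter (fun t => B t j < B i k)).card := by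
    rw [← countP_colMultiset B j (fun x => x < B i k), hBA j,
      countP_colMultiset A j (fun x => x < B i k)]
    exact h3
  exact key_lemma (fun t => B t j) (hBcols j) (fun x => x < B i k)
    (fun x y hxy hy => lt_of_le_of_lt hxy hy) i h4
end

section
/- Let a, b ∈ D, where D is the set of strictly increasing n-tuples of positive integers bounded by m. The 2-row tableau [a, b] with a ≥_τ b (lexicographically, where the first nonzero entry of a − b is negative) is standard (i.e., minimal in the graded reverse lexicographic order among all pairs with the same column supports) if and only if a_j ≤ b_j for all j ∈ [n]. -/
/-- `u >_τ v`: at the first index where `u` and `v` differ, `u` has the smaller entry. -/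
def lexGT {n : ℕ} (u v : Fin n → ℕ) : Prop :=
  ∃ i : Fin n, u i < v i ∧ ∀ j : Fin n, j < i → u j = v j

/-- `u ≥_τ v`. -/
def lexGE {n : ℕ} (u v : Fin n → ℕ) : Prop := u = v ∨ lexGT u v

/-- Membership in `D`: strictly increasing `n`-tuples of positive integers bounded by `m`. -/
def inD {n : ℕ} (m : ℕ) (a : Fin n → ℕ) : Prop :=
  (∀ j, 1 ≤ a j) ∧ StrictMono a ∧ ∀ j, a j ≤ m

/-- `T_p T_q >_σ T_a T_b` in the graded reverse lexicographic order, for pairs written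
with the τ-larger row first (`p ≥_τ q`, `a ≥_τ b`): since σ is revlex, the comparison
is decided by the τ-smaller rows first. -/
def sigmaGT {n : ℕ} (p q a b : Fin n → ℕ) : Prop :=
  lexGT q b ∨ (q = b ∧ lexGT p a)

lemma pair_eq_cases {x y z w : ℕ} (h : ({x, y} : Multiset ℕ) = {z, w}) :
    (x = z ∧ y = w) ∨ (x = w ∧ y = z) := by
  rw [Multiset.insert_eq_cons, Multiset.insert_eq_cons, Multiset.cons_eq_cons] at h
  rcases h with ⟨h1, h2⟩ | ⟨hne, cs, h1, h2⟩
  · exact Or.inl ⟨h1, Multiset.singleton_inj.mp h2⟩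
  · have hc : cs = 0 := by
      have := congrArg Multiset.card h1
      simpa using this
    subst hc
    simp only [Multiset.cons_zero, Multiset.singleton_inj] at h1 h2
    exact Or.inr ⟨h2.symm, h1⟩

lemma lexGE_of_le {n : ℕ} {p q : Fin n → ℕ} (h : ∀ j, p j ≤ q j) : lexGE p q := by
  by_cases hpq : p = q
  · exact Or.inl hpq
  · refine Or.inr ?_
    have hne : ∃ j, p j ≠ q j := Function.ne_iff.mp hpq
    set S := Finset.univ.filter fun j => p j ≠ q j with hSdef
    have hS : S.Nonempty := ⟨hne.choose, by simp [hSdef, hne.choose_spec]⟩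
    refine ⟨S.min' hS, lt_of_le_of_ne (h _) ?_, ?_⟩
    · have := S.min'_mem hS
      simpa [hSdef] using this
    · intro j hj
      by_contra hne'
      exact absurd (S.min'_le j (by simp [hSdef, hne'])) (not_le.mpr hj)

/-- The 2-row tableau `[a,b]` with `a ≥_τ b` is standard (σ-minimal among all
semistandard pairs with the same column supports) iff `a j ≤ b j` for all `j`. -/
theorem stmt_4 {n m : ℕ} (a b : Fin n → ℕ)
    (ha : inD m a) (hb : inD m b) (hab : lexGE a b) :
    (∀ p q : Fin n → ℕ, inD m p → inD m q → lexGE p q →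
        (∀ j, ({p j, q j} : Multiset ℕ) = {a j, b j}) → (p, q) ≠ (a, b) →
        sigmaGT p q a b) ↔
      ∀ j, a j ≤ b j := by
  constructor
  · intro hstd
    by_contra hc
    push_neg at hc
    obtain ⟨i, hi⟩ := hc
    set p : Fin n → ℕ := fun j => min (a j) (b j) with hpdef
    set q : Fin n → ℕ := fun j => max (a j) (b j) with hqdef
    have hpD : inD m p :=
      ⟨fun j => le_min (ha.1 j) (hb.1 j),
       fun j k hjk => min_lt_min (ha.2.1 hjk) (hb.2.1 hjk),
       fun j => min_le_of_left_le (ha.2.2 j)⟩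
    have hqD : inD m q :=
      ⟨fun j => le_max_of_le_left (ha.1 j),
       fun j k hjk => max_lt_max (ha.2.1 hjk) (hb.2.1 hjk),
       fun j => max_le (ha.2.2 j) (hb.2.2 j)⟩
    have hcol : ∀ j, ({p j, q j} : Multiset ℕ) = {a j, b j} := by
      intro j
      rcases le_total (a j) (b j) with h | h
      · simp [hpdef, hqdef, min_eq_left h, max_eq_right h]
      · simp only [hpdef, hqdef, min_eq_right h, max_eq_left h]
        exact Multiset.pair_comm _ _
    have hne : (p, q) ≠ (a, b) := by
      intro h
      have hq' : q = b := congrArg Prod.snd h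
      have := congrFun hq' i
      simp only [hqdef] at this
      omega
    have := hstd p q hpD hqD (lexGE_of_le fun j => min_le_max) hcol hne
    rcases this with ⟨k, hk, -⟩ | ⟨hqb, -⟩
    · exact absurd hk (not_lt.mpr (le_max_right _ _))
    · have := congrFun hqb i
      simp only [hqdef] at this
      omega
  · intro h p q hp hq hpq hcol hne
    have hcols : ∀ j, (p j = a j ∧ q j = b j) ∨ (p j = b j ∧ q j = a j) :=
      fun j => pair_eq_cases (hcol j)
    have hex : ∃ j, q j ≠ b j := by
      by_contra hc
      push_neg at hc
      apply hne
      have hpa : p = a := funext fun j => by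
        rcases hcols j with ⟨h1, h2⟩ | ⟨h1, h2⟩
        · exact h1
        · have := hc j; omega
      rw [hpa, funext hc]
    left
    set S := Finset.univ.filter fun j => q j ≠ b j with hSdef
    have hS : S.Nonempty := ⟨hex.choose, by simp [hSdef, hex.choose_spec]⟩
    set i := S.min' hS with hidef
    have hi : q i ≠ b i := by
      have := S.min'_mem hS
      simpa [hSdef] using this
    rcases hcols i with ⟨-, h2⟩ | ⟨-, h2⟩
    · exact absurd h2 hi
    · refine ⟨i, ?_, ?_⟩
      · have := h i; omega
      · intro j hj
        by_contra hne'
        exact absurd (S.min'_le j (by simp [hSdef, hne'])) (not_le.mpr hj)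
end

section
/- A p-row tableau A = [a^1, ..., a^p] with all rows in D is standard if and only if every 2-row subtableau [a^h, a^k] with h < k is standard. Equivalently, A is standard if and only if a^h_j ≤ a^k_j for all 1 ≤ h < k ≤ p and all columns j. -/
/-- `T_{B 0} ⋯ T_{B (p-1)} >_σ T_{A 0} ⋯ T_{A (p-1)}` in the graded reverse
lexicographic order, for tableaux whose rows are sorted τ-decreasingly: the comparison
is decided at the last row (from the bottom) where the tableaux differ. -/
def sigmaGTrows {p n : ℕ} (B A : Fin p → Fin n → ℕ) : Prop :=
  ∃ k : Fin p, (∀ l : Fin p, k < l → B l = A l) ∧ lexGT (B k) (A k)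

/-!
The σ-order on tableaux is the colexicographic order on rows, each row compared
lexicographically. If every column of `A` is weakly increasing downwards, then in the last row
`k` where a tableau `B` with the same column supports differs from `A`, every entry `B k j` also
occurs in column `j` of `A` at some row `l ≤ k`, so `B k ≤ A k` entrywise and hence `B >σ A`.
Conversely, sorting every column of `A` yields such a column-monotone tableau, still with strictly
increasing rows (sorting preserves entrywise strict inequalities between columns); if `A` were
σ-minimal and not column-monotone, it would be both σ-below and σ-above its column sort.
-/

open Finset

section Orders

variable {n p : ℕ}

theorem lexGT_iff {u v : Fin n → ℕ} : lexGT u v ↔ toLex u < toLex v :=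
  ⟨fun ⟨i, hlt, heq⟩ => ⟨i, heq, hlt⟩, fun ⟨i, heq, hlt⟩ => ⟨i, hlt, heq⟩⟩

theorem lexGE_iff {u v : Fin n → ℕ} : lexGE u v ↔ toLex u ≤ toLex v := by
  rw [lexGE, lexGT_iff, le_iff_eq_or_lt, toLex_inj]
  exact Iff.rfl

theorem lexGE_of_le_s5 {u v : Fin n → ℕ} (h : u ≤ v) : lexGE u v :=
  lexGE_iff.2 (Pi.toLex_monotone h)

theorem sigmaGTrows_iff {B A : Fin p → Fin n → ℕ} :
    sigmaGTrows B A ↔ toColex (fun k => toLex (B k)) < toColex (fun k => toLex (A k)) :=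
  ⟨fun ⟨k, heq, hlt⟩ => ⟨k, heq, lexGT_iff.1 hlt⟩,
    fun ⟨k, heq, hlt⟩ => ⟨k, heq, lexGT_iff.2 hlt⟩⟩

theorem sigmaGTrows.asymm {B A : Fin p → Fin n → ℕ} (h : sigmaGTrows B A) :
    ¬ sigmaGTrows A B := by
  rw [sigmaGTrows_iff] at h ⊢
  exact h.asymm

end Orders

theorem Multiset.map_filter_eq_of_map_eq {ι α : Type*} {s : Multiset ι} {f g : ι → α}
    (P : ι → Prop) [DecidablePred P] (h : s.map f = s.map g)
    (hP : ∀ l ∈ s, ¬ P l → f l = g l) :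
    (s.filter P).map f = (s.filter P).map g := by
  have hrest : (s.filter (¬ P ·)).map f = (s.filter (¬ P ·)).map g :=
    Multiset.map_congr rfl fun l hl => (Multiset.mem_filter.1 hl).elim (hP l)
  rw [← Multiset.filter_add_not P s, Multiset.map_add, Multiset.map_add, hrest] at h
  exact add_right_cancel h

theorem sigmaGTrows_of_colMultiset_eq {p n : ℕ} {B A : Fin p → Fin n → ℕ}
    (hA : ∀ j, Monotone (A · j)) (hcol : ∀ j, colMultiset B j = colMultiset A j)
    (hne : B ≠ A) : sigmaGTrows B A := by
  rw [sigmaGTrows_iff]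
  refine lt_of_not_ge fun hge => ?_
  have hgt := hge.lt_of_ne fun h => hne (funext fun l => congrFun h l).symm
  obtain ⟨k, hAB, hAk⟩ := sigmaGTrows_iff.2 hgt
  have hBA : B k ≤ A k := fun j => by
    have hmem : B k j ∈ (univ.val.filter (· ≤ k)).map (B · j) :=
      Multiset.mem_map_of_mem _ (Multiset.mem_filter.2 ⟨mem_univ_val k, le_rfl⟩)
    rw [Multiset.map_filter_eq_of_map_eq _ (hcol j)
      fun l _ hl => congrFun (hAB l (not_le.1 hl)).symm j] at hmem
    obtain ⟨l, hl, hAl⟩ := Multiset.mem_map.1 hmem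
    exact hAl ▸ hA j (Multiset.mem_filter.1 hl).2
  exact (Pi.toLex_monotone hBA).not_gt (lexGT_iff.1 hAk)

theorem Finset.card_filter_comp_perm {ι α : Type*} [Fintype ι] (f : ι → α) (σ : Equiv.Perm ι)
    (P : α → Prop) [DecidablePred P] :
    #{i | P (f (σ i))} = #{i | P (f i)} :=
  card_equiv σ (by simp)

theorem Tuple.comp_sort_lt_comp_sort {α : Type*} [LinearOrder α] {n : ℕ} {f g : Fin n → α}
    (h : ∀ i, f i < g i) (j : Fin n) : f (sort f j) < g (sort g j) := by
  classical
  set b := g (sort g j)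
  refine (Tuple.lt_card_lt_iff_apply_lt_of_monotone (monotone_sort f)).1 ?_
  calc j < #{i | (g ∘ sort g) i ≤ b} :=
        (Tuple.lt_card_le_iff_apply_le_of_monotone (monotone_sort g)).2 le_rfl
    _ = #{i | g i ≤ b} := card_filter_comp_perm g _ (· ≤ b)
    _ ≤ #{i | f i < b} := card_le_card (monotone_filter_right _ fun i _ => (h i).trans_le)
    _ = #{i | (f ∘ sort f) i < b} := (card_filter_comp_perm f _ (· < b)).symm

section SortCols

variable {p n : ℕ}

def sortCols (A : Fin p → Fin n → ℕ) : Fin p → Fin n → ℕ :=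
  fun i j => A (Tuple.sort (A · j) i) j

theorem monotone_sortCols (A : Fin p → Fin n → ℕ) (j : Fin n) : Monotone (sortCols A · j) :=
  Tuple.monotone_sort (A · j)

theorem colMultiset_sortCols (A : Fin p → Fin n → ℕ) (j : Fin n) :
    colMultiset (sortCols A) j = colMultiset A j := by
  change univ.val.map ((A · j) ∘ Tuple.sort (A · j)) = univ.val.map (A · j)
  rw [← Multiset.map_map, Multiset.map_univ_val_equiv]

theorem inD_sortCols {m : ℕ} {A : Fin p → Fin n → ℕ} (hA : ∀ h, inD m (A h)) (i : Fin p) :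
    inD m (sortCols A i) :=
  ⟨fun j => (hA _).1 j,
    fun _ _ hj => Tuple.comp_sort_lt_comp_sort (fun l => (hA l).2.1 hj) i,
    fun j => (hA _).2.2 j⟩

end SortCols

theorem stmt_5_general {p n m : ℕ} (A : Fin p → Fin n → ℕ)
    (hrows : ∀ h, inD m (A h)) :
    (∀ B : Fin p → Fin n → ℕ, (∀ h, inD m (B h)) →
        (∀ h k : Fin p, h ≤ k → lexGE (B h) (B k)) →
        (∀ j, colMultiset B j = colMultiset A j) → B ≠ A → sigmaGTrows B A) ↔
      ∀ h k : Fin p, h < k → ∀ j, A h j ≤ A k j := by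
  have hmono : (∀ h k : Fin p, h < k → ∀ j, A h j ≤ A k j) ↔ ∀ j, Monotone (A · j) := by
    simp only [monotone_iff_forall_lt]
    exact ⟨fun h j a b hab => h a b hab j, fun h a b hab j => h j hab⟩
  rw [hmono]
  refine ⟨fun hmin => ?_, fun hA B _ _ hcol hne => sigmaGTrows_of_colMultiset_eq hA hcol hne⟩
  by_contra hA
  have hne : sortCols A ≠ A := fun h => hA (h ▸ monotone_sortCols A)
  have hsemi : ∀ h k : Fin p, h ≤ k → lexGE (sortCols A h) (sortCols A k) :=
    fun _ _ hhk => lexGE_of_le_s5 fun j => monotone_sortCols A j hhk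
  exact (hmin _ (inD_sortCols hrows) hsemi (colMultiset_sortCols A) hne).asymm
    (sigmaGTrows_of_colMultiset_eq (monotone_sortCols A)
      (fun j => (colMultiset_sortCols A j).symm) hne.symm)

/-- A semistandard `p`-row tableau `A` with rows in `D` is standard (σ-minimal among
all semistandard tableaux with the same column supports) iff
`A h j ≤ A k j` for all `h < k` and all columns `j`; equivalently, iff every 2-row
subtableau is standard. -/
theorem stmt_5 {p n m : ℕ} (A : Fin p → Fin n → ℕ)
    (hrows : ∀ h, inD m (A h))
    (hsemi : ∀ h k : Fin p, h ≤ k → lexGE (A h) (A k)) :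
    (∀ B : Fin p → Fin n → ℕ, (∀ h, inD m (B h)) →
        (∀ h k : Fin p, h ≤ k → lexGE (B h) (B k)) →
        (∀ j, colMultiset B j = colMultiset A j) → B ≠ A → sigmaGTrows B A) ↔
      ∀ h k : Fin p, h < k → ∀ j, A h j ≤ A k j :=
  stmt_5_general A hrows
end

section
/- The tableau B produced by sorting each column of A into nondecreasing order is the unique standard tableau with the same support as A. In particular, for any p-row tableau A with rows in D, there exists a unique standard tableau B with supp(A) = supp(B), and it is obtained by columnwise sorting. -/
/-!
In a nondecreasing tuple `f : Fin p → α`, `f i < c` holds exactly when more than `i` entries are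
`< c`. These counts depend only on the multiset of values, so two nondecreasing columns with the
same support coincide. For the rows of the column-sorted tableau: if `A k j < A k j'` in every row,
then at least `i + 1` entries of column `j` lie below the `i`-th smallest entry `c` of column `j'`
(the row-partners of its `i + 1` smallest entries), so the `i`-th smallest entry of column `j` is
`< c` too.
-/

open Finset

section Counting

variable {ι α : Type*} [Fintype ι]

lemma card_filter_comp_eq_of_map_univ_eq {f g : ι → α} (h : univ.val.map f = univ.val.map g)
    (P : α → Prop) [DecidablePred P] : #{i | P (f i)} = #{i | P (g i)} := by
  have hcount (f : ι → α) : #{i | P (f i)} = (univ.val.map f).countP P := by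
    rw [Multiset.countP_map, Finset.card_def, Finset.filter_val]
  rw [hcount, hcount, h]

lemma map_univ_val_comp_perm (f : ι → α) (σ : Equiv.Perm ι) :
    univ.val.map (f ∘ σ) = univ.val.map f := by
  rw [← Multiset.map_map, Multiset.map_univ_val_equiv]

end Counting

section Sorting

variable {p : ℕ} {α : Type*} [LinearOrder α]

lemma Monotone.eq_of_map_univ_eq {f g : Fin p → α} (hf : Monotone f) (hg : Monotone g)
    (h : univ.val.map f = univ.val.map g) : f = g := by
  funext i
  refine eq_of_forall_gt_iff fun c => ?_
  rw [← Tuple.lt_card_lt_iff_apply_lt_of_monotone hf,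
    ← Tuple.lt_card_lt_iff_apply_lt_of_monotone hg, card_filter_comp_eq_of_map_univ_eq h (· < c)]

lemma Tuple.comp_sort_lt_comp_sort_s6 {f g : Fin p → α} (hfg : ∀ k, f k < g k) (i : Fin p) :
    (f ∘ sort f) i < (g ∘ sort g) i := by
  set c := (g ∘ sort g) i
  have hg : (i : ℕ) < #{k | g k ≤ c} := by
    rw [← card_filter_comp_eq_of_map_univ_eq (map_univ_val_comp_perm g (sort g)) (· ≤ c)]
    exact (lt_card_le_iff_apply_le_of_monotone (monotone_sort g)).2 le_rfl
  have hgf : #{k | g k ≤ c} ≤ #{k | f k < c} :=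
    card_le_card (monotone_filter_right _ fun k _ hk => (hfg k).trans_le hk)
  refine (lt_card_lt_iff_apply_lt_of_monotone (monotone_sort f)).1 ?_
  rw [card_filter_comp_eq_of_map_univ_eq (map_univ_val_comp_perm f (sort f)) (· < c)]
  omega

end Sorting

def sortColumns {p n : ℕ} (A : Fin p → Fin n → ℕ) : Fin p → Fin n → ℕ :=
  fun i j => A (Tuple.sort (fun k => A k j) i) j

lemma colMultiset_sortColumns {p n : ℕ} (A : Fin p → Fin n → ℕ) (j : Fin n) :
    colMultiset (sortColumns A) j = colMultiset A j :=
  map_univ_val_comp_perm (fun k => A k j) _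

/-- For any `p`-row tableau `A` with rows in `D`, there exists a unique standard
tableau `B` (rows in `D`, columns nondecreasing) with the same column supports as `A`;
it is obtained from `A` by columnwise sorting. -/
theorem stmt_6 {p n m : ℕ} (A : Fin p → Fin n → ℕ)
    (hrows : ∀ i, inD m (A i)) :
    ∃! B : Fin p → Fin n → ℕ,
      (∀ i, inD m (B i)) ∧
      (∀ j : Fin n, Monotone (fun i => B i j)) ∧
      (∀ j, colMultiset B j = colMultiset A j) := by
  have hsorted (j : Fin n) : Monotone (fun i => sortColumns A i j) :=
    Tuple.monotone_sort (fun k => A k j)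
  refine ⟨sortColumns A, ⟨fun i => ⟨?_, ?_, ?_⟩, hsorted, colMultiset_sortColumns A⟩, ?_⟩
  · exact fun j => (hrows _).1 j
  · exact fun j j' hjj' => Tuple.comp_sort_lt_comp_sort_s6 (fun k => (hrows k).2.1 hjj') i
  · exact fun j => (hrows _).2.2 j
  · rintro B ⟨-, hB, hsupp⟩
    funext i j
    have hcol := (hB j).eq_of_map_univ_eq (hsorted j)
      ((hsupp j).trans (colMultiset_sortColumns A j).symm)
    exact congrFun hcol i
end

section
/- Let a, b ∈ D with all entries of a in an interval I_a = [u_a, v_a] and all entries of b in an interval I_b = [u_b, v_b], where u_a ≤ u_b, v_a ≤ v_b, and a ≥_τ b. Let e, g ∈ D be such that: (i) e_j ≤ min(a_j, b_j) for every j; (ii) the multiset union of the entries of e and g equals the multiset union of the entries of a and b. Then all entries of e lie in I_a and all entries of g lie in I_b. -/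
/-- The multiset of all entries of a tuple. -/
def entries {n : ℕ} (a : Fin n → ℕ) : Multiset ℕ :=
  Finset.univ.val.map a

/-!
The entries of `e` and `g` are entries of `a` or `b`, hence lie in `[ua, vb]`; the upper bound
`e j ≤ a j ≤ va` is given. For `g j ≥ ub`, count entries below `ub`: `b` has none and `e ≤ a`
pointwise gives `e` at least as many as `a`, so the multiset identity leaves none for `g`.
-/

section Entries

variable {n : ℕ}

theorem forall_mem_entries {p : ℕ → Prop} {a : Fin n → ℕ} :
    (∀ x ∈ entries a, p x) ↔ ∀ j, p (a j) := by
  simp [entries]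

theorem countP_lt_entries_le_of_le {a e : Fin n → ℕ} (hea : ∀ j, e j ≤ a j) (c : ℕ) :
    (entries a).countP (· < c) ≤ (entries e).countP (· < c) := by
  simp only [entries, Multiset.countP_map]
  exact Multiset.card_le_card
    (Multiset.monotone_filter_right _ fun j hj => (hea j).trans_lt hj)

theorem le_of_entries_add_eq_add {a b e g : Fin n → ℕ} {c : ℕ}
    (hea : ∀ j, e j ≤ a j) (hb : ∀ j, c ≤ b j)
    (h : entries e + entries g = entries a + entries b) (j : Fin n) : c ≤ g j := by
  have hb0 : (entries b).countP (· < c) = 0 :=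
    Multiset.countP_eq_zero.2 (forall_mem_entries.2 fun j => (hb j).not_gt)
  have hg0 : (entries g).countP (· < c) = 0 := by
    have hcount := congrArg (Multiset.countP (· < c)) h
    rw [Multiset.countP_add, Multiset.countP_add, hb0] at hcount
    have := countP_lt_entries_le_of_le hea c
    omega
  exact not_lt.1 (forall_mem_entries.1 (Multiset.countP_eq_zero.1 hg0) j)

end Entries

theorem stmt_10_general {n : ℕ} (ua va ub vb : ℕ)
    (hu : ua ≤ ub) (hv : va ≤ vb)
    (a b e g : Fin n → ℕ)
    (haI : ∀ j, ua ≤ a j ∧ a j ≤ va)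
    (hbI : ∀ j, ub ≤ b j ∧ b j ≤ vb)
    (hemin : ∀ j, e j ≤ min (a j) (b j))
    (hmult : entries e + entries g = entries a + entries b) :
    (∀ j, ua ≤ e j ∧ e j ≤ va) ∧ (∀ j, ub ≤ g j ∧ g j ≤ vb) := by
  have hea : ∀ j, e j ≤ a j := fun j => (hemin j).trans (min_le_left _ _)
  have hbounds : ∀ x ∈ entries e + entries g, ua ≤ x ∧ x ≤ vb := by
    rw [hmult]
    rintro x hx
    rcases Multiset.mem_add.1 hx with hx | hx
    · obtain ⟨hlo, hhi⟩ := (forall_mem_entries (p := fun y => ua ≤ y ∧ y ≤ va)).2 haI x hx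
      exact ⟨hlo, hhi.trans hv⟩
    · obtain ⟨hlo, hhi⟩ := (forall_mem_entries (p := fun y => ub ≤ y ∧ y ≤ vb)).2 hbI x hx
      exact ⟨hu.trans hlo, hhi⟩
  have he := forall_mem_entries.1 fun x hx => hbounds x (Multiset.mem_add.2 (Or.inl hx))
  have hg := forall_mem_entries.1 fun x hx => hbounds x (Multiset.mem_add.2 (Or.inr hx))
  exact ⟨fun j => ⟨(he j).1, (hea j).trans (haI j).2⟩,
    fun j => ⟨le_of_entries_add_eq_add hea (fun j => (hbI j).1) hmult j, (hg j).2⟩⟩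

/-- Vibrations stay within the unit-interval column index set: if all entries of `a`
lie in `[ua, va]`, all entries of `b` lie in `[ub, vb]` (with `ua ≤ ub`, `va ≤ vb`,
`a ≥_τ b`), and `e, g ∈ D` satisfy `e j ≤ min (a j) (b j)` for all `j` and have the
same combined multiset of entries as `(a, b)`, then all entries of `e` lie in
`[ua, va]` and all entries of `g` lie in `[ub, vb]`. -/
theorem stmt_10 {n m : ℕ} (ua va ub vb : ℕ)
    (hu : ua ≤ ub) (hv : va ≤ vb)
    (hua : 1 ≤ ua) (hvb : vb ≤ m)
    (a b e g : Fin n → ℕ)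
    (ha : inD m a) (hb : inD m b) (he : inD m e) (hg : inD m g)
    (hab : lexGE a b)
    (haI : ∀ j, ua ≤ a j ∧ a j ≤ va)
    (hbI : ∀ j, ub ≤ b j ∧ b j ≤ vb)
    (hemin : ∀ j, e j ≤ min (a j) (b j))
    (hmult : entries e + entries g = entries a + entries b) :
    (∀ j, ua ≤ e j ∧ e j ≤ va) ∧ (∀ j, ub ≤ g j ∧ g j ≤ vb) :=
  stmt_10_general ua va ub vb hu hv a b e g haI hbI hemin hmult
end

section
/- For u, v ∈ D with {u_j, v_j} = {a_j, b_j} as multisets for every column j, where [a,b] is standard (a_j ≤ b_j for all j), we have u ≥_τ b and v ≥_τ b. Consequently T_u T_v ≥_σ T_a T_b in the graded reverse lexicographic order. -/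
lemma exists_min_diff {n : ℕ} {f g : Fin n → ℕ} (h : f ≠ g) :
    ∃ i, f i ≠ g i ∧ ∀ j, j < i → f j = g j := by
  classical
  have hex : ∃ k, ∃ hk : k < n, f ⟨k, hk⟩ ≠ g ⟨k, hk⟩ := by
    by_contra hc
    push_neg at hc
    exact h (funext fun i => by simpa using hc i.val i.isLt)
  obtain ⟨hk, hne⟩ := Nat.find_spec hex
  refine ⟨⟨Nat.find hex, hk⟩, hne, ?_⟩
  intro j hj
  have hmin := Nat.find_min hex (m := j.val) hj
  push_neg at hmin
  simpa using hmin j.isLt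

/-- If `[a,b]` is a standard pair and `u, v ∈ D` (with `u ≥_τ v`) have the same column
supports, then `u ≥_τ b`, `v ≥_τ b`, and `T_u T_v ≥_σ T_a T_b`. -/
theorem stmt_12 {n m : ℕ} (a b u v : Fin n → ℕ)
    (ha : inD m a) (hb : inD m b) (hu : inD m u) (hv : inD m v)
    (hab : lexGE a b) (hstd : ∀ j, a j ≤ b j)
    (huv : lexGE u v)
    (hsupp : ∀ j, ({u j, v j} : Multiset ℕ) = {a j, b j}) :
    lexGE u b ∧ lexGE v b ∧ ((u = a ∧ v = b) ∨ sigmaGT u v a b) := by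
  have hcol : ∀ j, (u j = a j ∧ v j = b j) ∨ (u j = b j ∧ v j = a j) := by
    intro j
    have h := hsupp j
    have hmem : u j ∈ ({a j, b j} : Multiset ℕ) := h ▸ (by simp)
    have hsum : u j + v j = a j + b j := by
      have := congrArg Multiset.sum h
      simpa using this
    simp only [Multiset.mem_cons, Multiset.mem_singleton, Multiset.insert_eq_cons] at hmem
    rcases hmem with h1 | h1 <;> omega
  have hub : lexGE u b := by
    by_cases h : u = b
    · exact Or.inl h
    · right
      obtain ⟨i, hne, hpre⟩ := exists_min_diff h
      rcases hcol i with ⟨h1, h2⟩ | ⟨h1, h2⟩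
      · exact ⟨i, by have := hstd i; omega, hpre⟩
      · exact absurd h1 hne
  have hvb : lexGE v b := by
    by_cases h : v = b
    · exact Or.inl h
    · right
      obtain ⟨i, hne, hpre⟩ := exists_min_diff h
      rcases hcol i with ⟨h1, h2⟩ | ⟨h1, h2⟩
      · exact absurd h2 hne
      · exact ⟨i, by have := hstd i; omega, hpre⟩
  refine ⟨hub, hvb, ?_⟩
  by_cases h : v = b
  · left
    refine ⟨funext fun j => ?_, h⟩
    have hj := congrFun h j
    rcases hcol j with ⟨h1, h2⟩ | ⟨h1, h2⟩ <;> omega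
  · right; left
    rcases hvb with h' | h'
    · exact absurd h' h
    · exact h'
end

section
/- Let g be a squarefree monomial of the form x_{1,c_1} x_{2,c_2} ⋯ x_{n,c_n} with c ∈ 𝓛 (the column index set of a two-sided ladder with row intervals S_i = [l_i, k_i]). Suppose for some row l_0 the monomial g is divisible by x_{l_0, k_1} with k_1 > k_0, and suppose there exists k_2 ≤ k_0 with (g · x_{l_0,k_2})/x_{l_0,k_1} again of the form x_{1,c'_1}⋯x_{n,c'_n} for some c' ∈ 𝓛. Then (g · x_{l_0,k_0})/x_{l_0,k_1} is also of this form for some c'' ∈ 𝓛. -/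
/-- Membership in the column index set `𝓛` of a two-sided ladder. -/
def inLadder {n : ℕ} (l k : Fin n → ℕ) (a : Fin n → ℕ) : Prop :=
  StrictMono a ∧ ∀ i, l i ≤ a i ∧ a i ≤ k i

/-- Contiguity of ladder rows: if `c ∈ 𝓛` has `c l₀ = k₁ > k₀` and replacing the entry
`k₁` in row `l₀` by some `k₂ ≤ k₀` again yields an element of `𝓛`, then replacing it by
`k₀` itself also yields an element of `𝓛` (so the corresponding squarefree monomial
exchange is possible at column `k₀`). -/
theorem stmt_13 {n m : ℕ} (l k : Fin n → ℕ)
    (hl : Monotone l) (hk : Monotone k)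
    (hlk : ∀ i, l i < k i) (hl1 : ∀ i, 1 ≤ l i) (hkm : ∀ i, k i ≤ m)
    (c : Fin n → ℕ) (hc : inLadder l k c)
    (l0 : Fin n) (k0 k1 k2 : ℕ)
    (hck : c l0 = k1) (h01 : k0 < k1) (h2 : k2 ≤ k0)
    (hupd : inLadder l k (Function.update c l0 k2)) :
    inLadder l k (Function.update c l0 k0) := by
  obtain ⟨hcmono, hcb⟩ := hc
  obtain ⟨humono, hub⟩ := hupd
  constructor
  · intro i j hij
    rcases eq_or_ne i l0 with hi | hi
    · rcases eq_or_ne j l0 with hj | hj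
      · exact absurd (hi.trans hj.symm ▸ hij) (lt_irrefl _)
      · subst hi
        simp only [Function.update_self, Function.update_of_ne hj]
        calc k0 < k1 := h01
          _ = c i := hck.symm
          _ < c j := hcmono hij
    · rcases eq_or_ne j l0 with hj | hj
      · subst hj
        simp only [Function.update_self, Function.update_of_ne hi]
        have := humono hij
        simp only [Function.update_self, Function.update_of_ne hi] at this
        exact lt_of_lt_of_le this h2
      · simpa [Function.update_of_ne hi, Function.update_of_ne hj] using hcmono hij
  · intro i
    rcases eq_or_ne i l0 with hi | hi
    · subst hi
      have h1 := hub i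
      simp only [Function.update_self] at h1 ⊢
      refine ⟨le_trans h1.1 h2, ?_⟩
      have : k0 ≤ c i := le_of_lt (hck ▸ h01)
      exact le_trans this (hcb i).2
    · simpa [Function.update_of_ne hi] using hcb i
end

section
/- Leading-term comparison in the Eagon–Northcott lifting: with the lexicographic order τ on K[x_{i,j}] given by x_{i,j} > x_{l,k} iff i < l or (i = l and j < k), fix columns c_1 < ... < c_{n+1} ≤ m and a row index i ∈ [n]. For a generic matrix X, the initial term of x_{i,c_i}|c∖c_i| equals the initial term of x_{i,c_{i+1}}|c∖c_{i+1}| (up to sign), and for every j ∉ {i, i+1} the initial term of x_{i,c_j}|c∖c_j| is strictly smaller in τ than this common initial term. -/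
/-!
Deleting `c_i` or `c_{i+1}` leaves the same column in every row except row `i`, where the two
terms merely exchange the factors `x_{i,c_i}` and `x_{i,c_{i+1}}`. For `j < i` the exponent
vectors first differ in row `j`, at `x_{j,c_j}`, which divides the common term but not
`x_{i,c_j}|c∖c_j|` (whose row `j` uses `c_{j+1}`); for `j > i + 1` they agree above row `i` and
first differ at `x_{i,c_{i+1}}`.
-/

/-- `M >_τ N` for monomials in the variables `x_{i,j}`, given as exponent vectors:
with the variable order `x_{i,j} > x_{l,k}` iff `i < l` or (`i = l` and `j < k`),
`M` is lexicographically larger iff at the largest variable with different exponents it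
has the larger exponent. -/
def monGT {n m : ℕ} (M N : Fin n × Fin m → ℕ) : Prop :=
  ∃ p : Fin n × Fin m, N p < M p ∧
    ∀ q : Fin n × Fin m, (q.1 < p.1 ∨ (q.1 = p.1 ∧ q.2 < p.2)) → M q = N q

/-- The exponent vector of the τ-initial term of `x_{i, c j} · |c ∖ c j|`, where
`|c ∖ c j|` is the maximal minor of the generic matrix on the columns `c` with `c j`
deleted (its initial term is the main diagonal product). -/
def expEN {n m : ℕ} (c : Fin (n + 1) → Fin m) (i : Fin n) (j : Fin (n + 1)) :
    Fin n × Fin m → ℕ :=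
  fun q => (if q = (i, c j) then 1 else 0) +
    (Finset.univ.filter (fun a : Fin n => q = (a, c (j.succAbove a)))).card

namespace Fin

lemma succAbove_castSucc_eq_succAbove_succ {n : ℕ} {i a : Fin n} (h : a ≠ i) :
    i.castSucc.succAbove a = i.succ.succAbove a := by
  rcases h.lt_or_gt with h | h
  · rw [succAbove_castSucc_of_lt _ _ h, succAbove_succ_of_le _ _ h.le]
  · rw [succAbove_castSucc_of_le _ _ h.le, succAbove_succ_of_lt _ _ h]

end Fin

section expEN

variable {n m : ℕ} (c : Fin (n + 1) → Fin m) (i : Fin n)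

lemma expEN_apply (j : Fin (n + 1)) (a : Fin n) (x : Fin m) :
    expEN c i j (a, x) =
      (if (a, x) = (i, c j) then 1 else 0) + if x = c (j.succAbove a) then 1 else 0 := by
  rw [expEN, Finset.card_filter,
    Finset.sum_eq_single a (fun b _ hb => by simp [Prod.ext_iff, Ne.symm hb]) (by simp)]
  simp [Prod.ext_iff]

lemma expEN_apply_of_ne {j : Fin (n + 1)} {a : Fin n} (ha : a ≠ i) (x : Fin m) :
    expEN c i j (a, x) = if x = c (j.succAbove a) then 1 else 0 := by
  simp [expEN_apply, ha]

lemma expEN_apply_of_castSucc_lt {j : Fin (n + 1)} {a : Fin n} (hai : a < i)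
    (haj : a.castSucc < j) (x : Fin m) :
    expEN c i j (a, x) = if x = c a.castSucc then 1 else 0 := by
  rw [expEN_apply_of_ne c i hai.ne, Fin.succAbove_of_castSucc_lt _ _ haj]

theorem expEN_castSucc_eq_succ : expEN c i i.castSucc = expEN c i i.succ := by
  funext ⟨a, x⟩
  by_cases ha : a = i
  · subst ha
    simp [expEN_apply, add_comm]
  · rw [expEN_apply_of_ne c i ha, expEN_apply_of_ne c i ha,
      Fin.succAbove_castSucc_eq_succAbove_succ ha]

variable {c}

theorem monGT_expEN_castSucc_of_lt (hc : StrictMono c) {a : Fin n} (ha : a < i) :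
    monGT (expEN c i i.castSucc) (expEN c i a.castSucc) := by
  have hai : a.castSucc < i.castSucc := Fin.castSucc_lt_castSucc_iff.mpr ha
  refine ⟨(a, c a.castSucc), ?_, ?_⟩
  · rw [expEN_apply_of_castSucc_lt c i ha hai, expEN_apply_of_ne c i ha.ne,
      Fin.succAbove_castSucc_self]
    simp [(hc (Fin.castSucc_lt_succ (i := a))).ne]
  rintro ⟨b, y⟩ (hb | ⟨rfl, hy⟩)
  · have hba : b.castSucc < a.castSucc := Fin.castSucc_lt_castSucc_iff.mpr hb
    rw [expEN_apply_of_castSucc_lt c i (hb.trans ha) (hba.trans hai),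
      expEN_apply_of_castSucc_lt c i (hb.trans ha) hba]
  · rw [expEN_apply_of_castSucc_lt c i ha hai, expEN_apply_of_ne c i ha.ne,
      Fin.succAbove_castSucc_self]
    simp [hy.ne, (hy.trans (hc Fin.castSucc_lt_succ)).ne]

theorem monGT_expEN_succ_of_lt (hc : StrictMono c) {b : Fin n} (hb : i < b) :
    monGT (expEN c i i.castSucc) (expEN c i b.succ) := by
  have hib : i.succ < b.succ := Fin.succ_lt_succ_iff.mpr hb
  refine ⟨(i, c i.succ), ?_, ?_⟩
  · simp [expEN_apply, Fin.succAbove_succ_of_le _ _ hb.le, (hc hib).ne,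
      (hc (Fin.castSucc_lt_succ (i := i))).ne']
  rintro ⟨a, y⟩ (ha | ⟨rfl, hy⟩)
  · have hai : a.castSucc < i.castSucc := Fin.castSucc_lt_castSucc_iff.mpr ha
    rw [expEN_apply_of_castSucc_lt c i ha hai, expEN_apply_of_castSucc_lt c i ha
      (hai.trans (Fin.castSucc_lt_succ.trans hib))]
  · simp [expEN_apply, Fin.succAbove_succ_of_le _ _ hb.le, hy.ne, (hy.trans (hc hib)).ne]

end expEN

/-- Leading-term comparison in the Eagon–Northcott lifting: the initial terms of
`x_{i,c_i}|c∖c_i|` and `x_{i,c_{i+1}}|c∖c_{i+1}|` coincide (up to sign), and for every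
`j ∉ {i, i+1}` the initial term of `x_{i,c_j}|c∖c_j|` is strictly smaller in τ. -/
theorem stmt_16 {n m : ℕ} (c : Fin (n + 1) → Fin m) (hc : StrictMono c) (i : Fin n) :
    expEN c i i.castSucc = expEN c i i.succ ∧
    ∀ j : Fin (n + 1), j ≠ i.castSucc → j ≠ i.succ →
      monGT (expEN c i i.castSucc) (expEN c i j) := by
  refine ⟨expEN_castSucc_eq_succ c i, fun j hj₁ hj₂ => ?_⟩
  rcases hj₁.lt_or_gt with hj | hj
  · cases j using Fin.lastCases with
    | last => exact absurd hj (Fin.castSucc_lt_last i).not_gt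
    | cast a => exact monGT_expEN_castSucc_of_lt i hc (Fin.castSucc_lt_castSucc_iff.mp hj)
  · cases j using Fin.cases with
    | zero => exact absurd hj (Fin.not_lt_zero _)
    | succ b =>
      exact monGT_expEN_succ_of_lt i hc
        (Fin.succ_lt_succ_iff.mp ((Fin.castSucc_lt_iff_succ_le.mp hj).lt_of_ne' hj₂))
end
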